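/- arXiv:1609.07813 — 17 statements merged into one kernel-verified Lean document; each statement's English description precedes it below -/
import Mathlib

section
/- Let (A, ·, ε, α) be an ε-commutative Hom-associative color algebra and let ξ ∈ A_0 be an element of degree 0. Define a new product on A by x ∗ y := ξ·(x·y). Then (A, ∗, ε, α²) is an ε-commutative Hom-associative color algebra. Moreover, if A is multiplicative and α(ξ) = ξ, then (A, ∗, ε, α²) is multiplicative. -/
open scoped TensorProduct

variable {K G A : Type*}

/-- A skew-symmetric bicharacter on the abelian group `G` with values in the field `K`. -/
def IsBicharacter [Field K] [AddCommGroup G] (ε : G → G → K) : Prop :=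
  (∀ a b, ε a b ≠ 0) ∧
  (∀ a b, ε a b * ε b a = 1) ∧
  (∀ a b c, ε a (b + c) = ε a b * ε a c) ∧
  (∀ a b c, ε (a + b) c = ε a c * ε b c)

section Defs

variable [Field K] [AddCommGroup G] [AddCommGroup A] [Module K A]

/-- The bilinear product `mul` respects the grading `𝒜`: `A_a · A_b ⊆ A_{a+b}`. -/
def IsGradedMul (𝒜 : G → Submodule K A) (mul : A →ₗ[K] A →ₗ[K] A) : Prop :=
  ∀ a b : G, ∀ x ∈ 𝒜 a, ∀ y ∈ 𝒜 b, mul x y ∈ 𝒜 (a + b)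

/-- An even linear map: `f(A_a) ⊆ A_a`. -/
def IsEven (𝒜 : G → Submodule K A) (f : A →ₗ[K] A) : Prop :=
  ∀ a : G, ∀ x ∈ 𝒜 a, f x ∈ 𝒜 a

/-- `ε`-commutativity: `x·y = ε(x,y) y·x` for homogeneous `x, y`. -/
def IsEpsCommutative (𝒜 : G → Submodule K A) (ε : G → G → K)
    (mul : A →ₗ[K] A →ₗ[K] A) : Prop :=
  ∀ a b : G, ∀ x ∈ 𝒜 a, ∀ y ∈ 𝒜 b, mul x y = ε a b • mul y x

/-- A Hom-associative color algebra: `α(x)·(y·z) = (x·y)·α(z)` for homogeneous `x, y, z`. -/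
def IsHomAssociative (𝒜 : G → Submodule K A) (mul : A →ₗ[K] A →ₗ[K] A)
    (α : A →ₗ[K] A) : Prop :=
  IsGradedMul 𝒜 mul ∧ IsEven 𝒜 α ∧
  ∀ a b c : G, ∀ x ∈ 𝒜 a, ∀ y ∈ 𝒜 b, ∀ z ∈ 𝒜 c,
    mul (α x) (mul y z) = mul (mul x y) (α z)

/-- A Hom-Novikov color algebra. -/
def IsHomNovikov (𝒜 : G → Submodule K A) (ε : G → G → K)
    (mul : A →ₗ[K] A →ₗ[K] A) (α : A →ₗ[K] A) : Prop :=
  IsGradedMul 𝒜 mul ∧ IsEven 𝒜 α ∧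
  (∀ a b c : G, ∀ x ∈ 𝒜 a, ∀ y ∈ 𝒜 b, ∀ z ∈ 𝒜 c,
    mul (mul x y) (α z) = ε b c • mul (mul x z) (α y)) ∧
  (∀ a b c : G, ∀ x ∈ 𝒜 a, ∀ y ∈ 𝒜 b, ∀ z ∈ 𝒜 c,
    mul (mul x y) (α z) - mul (α x) (mul y z)
      = ε a b • (mul (mul y x) (α z) - mul (α y) (mul x z)))

/-- A Hom-Lie color algebra. -/
def IsHomLie (𝒜 : G → Submodule K A) (ε : G → G → K)
    (br : A →ₗ[K] A →ₗ[K] A) (α : A →ₗ[K] A) : Prop :=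
  IsGradedMul 𝒜 br ∧ IsEven 𝒜 α ∧
  (∀ a b : G, ∀ x ∈ 𝒜 a, ∀ y ∈ 𝒜 b, br x y = -(ε a b • br y x)) ∧
  (∀ a b c : G, ∀ x ∈ 𝒜 a, ∀ y ∈ 𝒜 b, ∀ z ∈ 𝒜 c,
    ε c a • br (α x) (br y z) + ε a b • br (α y) (br z x)
      + ε b c • br (α z) (br x y) = 0)

/-- The `ε`-commutator `[x, y] = x·y − ε(a,b) y·x` of elements `x, y`
of degrees `a, b` respectively. -/
def homBracket (ε : G → G → K) (mul : A →ₗ[K] A →ₗ[K] A)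
    (a b : G) (x y : A) : A :=
  mul x y - ε a b • mul y x

end Defs
/-- twisting an ε-commutative Hom-associative color algebra by
`x ∗ y := ξ·(x·y)` with `ξ` of degree `0` and twisting map `α²`. -/
theorem statement0 {K G A : Type*} [Field K] [AddCommGroup G] [DecidableEq G]
    [AddCommGroup A] [Module K A]
    (𝒜 : G → Submodule K A) [DirectSum.Decomposition 𝒜]
    (ε : G → G → K) (hε : IsBicharacter ε)
    (mul : A →ₗ[K] A →ₗ[K] A) (α : A →ₗ[K] A)
    (hA : IsHomAssociative 𝒜 mul α) (hcomm : IsEpsCommutative 𝒜 ε mul)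
    (ξ : A) (hξ : ξ ∈ 𝒜 (0 : G)) :
    IsHomAssociative 𝒜 (mul.compr₂ (mul ξ)) (α ∘ₗ α) ∧
    IsEpsCommutative 𝒜 ε (mul.compr₂ (mul ξ)) ∧
    ((∀ x y : A, α (mul x y) = mul (α x) (α y)) → α ξ = ξ →
      ∀ x y : A, (α ∘ₗ α) (mul.compr₂ (mul ξ) x y)
        = mul.compr₂ (mul ξ) ((α ∘ₗ α) x) ((α ∘ₗ α) y)) := by
  obtain ⟨hne, hskew, haddr, haddl⟩ := hε
  obtain ⟨hgr, heven, hassoc⟩ := hA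
  have hone : ∀ d : G, ε 0 d = 1 := by
    intro d
    have h := haddl 0 0 d
    rw [add_zero] at h
    have h2 : ε 0 d * 1 = ε 0 d * ε 0 d := by rw [mul_one]; exact h
    exact (mul_left_cancel₀ (hne 0 d) h2).symm
  have hcommξ : ∀ d : G, ∀ w ∈ 𝒜 d, mul ξ w = mul w ξ := by
    intro d w hw
    rw [hcomm 0 d ξ hξ w hw, hone, one_smul]
  refine ⟨⟨?_, ?_, ?_⟩, ?_, ?_⟩
  · intro a b x hx y hy
    have := hgr 0 (a + b) ξ hξ _ (hgr a b x hx y hy)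
    simpa [LinearMap.compr₂_apply] using this
  · intro a x hx
    exact heven a _ (heven a x hx)
  · intro a b c x hx y hy z hz
    simp only [LinearMap.compr₂_apply, LinearMap.coe_comp, Function.comp_apply]
    have hyz := hgr b c y hy z hz
    have hxy := hgr a b x hx y hy
    have hαx := heven a x hx
    have hαz := heven c z hz
    congr 1
    rw [hcommξ _ _ hyz, hassoc a (b + c) 0 (α x) hαx _ hyz ξ hξ,
        hassoc a b c x hx y hy z hz,
        hcommξ _ _ hxy,
        ← hassoc (a + b) 0 c (mul x y) hxy ξ hξ (α z) hαz,
        hcommξ c _ hαz,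
        hassoc (a + b) c 0 (mul x y) hxy (α z) hαz ξ hξ]
  · intro a b x hx y hy
    simp only [LinearMap.compr₂_apply]
    rw [hcomm a b x hx y hy, map_smul]
  · intro hmult hαξ x y
    simp only [LinearMap.compr₂_apply, LinearMap.coe_comp, Function.comp_apply]
    simp [hmult, hαξ]
end

section
/- Let (A, ·, ε, α) be a Hom-Novikov color algebra and let β : A → A be an even linear map that is a weak morphism, i.e. β(x·y) = β(x)·β(y) for all x, y. Then A_β = (A, β∘·, ε, β∘α) (with product x ∗ y = β(x·y) and twisting map β∘α) is a Hom-Novikov color algebra. Moreover, if A is multiplicative and β∘α = α∘β, then A_β is multiplicative. -/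
open scoped TensorProduct

variable {K G A : Type*}

/-- twisting a Hom-Novikov color algebra along a weak morphism `β`:
`A_β = (A, β∘·, ε, β∘α)` is Hom-Novikov; if moreover `A` is multiplicative and
`β∘α = α∘β`, then `A_β` is multiplicative. -/
theorem statement1 {K G A : Type*} [Field K] [AddCommGroup G] [DecidableEq G]
    [AddCommGroup A] [Module K A]
    (𝒜 : G → Submodule K A) [DirectSum.Decomposition 𝒜]
    (ε : G → G → K) (hε : IsBicharacter ε)
    (mul : A →ₗ[K] A →ₗ[K] A) (α : A →ₗ[K] A)
    (hN : IsHomNovikov 𝒜 ε mul α)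
    (β : A →ₗ[K] A) (hβeven : IsEven 𝒜 β)
    (hβ : ∀ x y : A, β (mul x y) = mul (β x) (β y)) :
    IsHomNovikov 𝒜 ε (mul.compr₂ β) (β ∘ₗ α) ∧
    ((∀ x y : A, α (mul x y) = mul (α x) (α y)) → β ∘ₗ α = α ∘ₗ β →
      ∀ x y : A, (β ∘ₗ α) (mul.compr₂ β x y)
        = mul.compr₂ β ((β ∘ₗ α) x) ((β ∘ₗ α) y)) := by
  obtain ⟨hgr, heven, hax1, hax2⟩ := hN
  have hsimp : ∀ x y : A, mul.compr₂ β x y = β (mul x y) := fun x y => rfl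
  refine ⟨⟨?_, ?_, ?_, ?_⟩, ?_⟩
  · intro a b x hx y hy
    exact hβeven _ _ (hgr a b x hx y hy)
  · intro a x hx
    exact hβeven a _ (heven a x hx)
  · intro a b c x hx y hy z hz
    simp only [hsimp, LinearMap.comp_apply, ← hβ, ← map_smul]
    rw [hax1 a b c x hx y hy z hz]
    simp only [map_smul, LinearMap.smul_apply]
  · intro a b c x hx y hy z hz
    simp only [hsimp, LinearMap.comp_apply, ← hβ, ← map_sub, ← map_smul]
    rw [hax2 a b c x hx y hy z hz]
  · intro hmult hcomm x y
    have h1 : β (α x) = α (β x) := congrFun (congrArg DFunLike.coe hcomm) x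
    have h2 : β (α y) = α (β y) := congrFun (congrArg DFunLike.coe hcomm) y
    simp only [hsimp, LinearMap.comp_apply, hβ, hmult, h1, h2]
end

section
/- Let (A, ·, ε, α) be a multiplicative Hom-Novikov color algebra. Then for every integer n ≥ 0, A^n = (A, α^n∘·, ε, α^{n+1}) (with product x ∗ y = α^n(x·y) and twisting map α^{n+1}) is a multiplicative Hom-Novikov color algebra. -/
open scoped TensorProduct

variable {K G A : Type*}

/-- for a multiplicative Hom-Novikov color algebra and any `n ≥ 0`,
`A^n = (A, α^n∘·, ε, α^{n+1})` is a multiplicative Hom-Novikov color algebra. -/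
theorem statement2 {K G A : Type*} [Field K] [AddCommGroup G] [DecidableEq G]
    [AddCommGroup A] [Module K A]
    (𝒜 : G → Submodule K A) [DirectSum.Decomposition 𝒜]
    (ε : G → G → K) (hε : IsBicharacter ε)
    (mul : A →ₗ[K] A →ₗ[K] A) (α : A →ₗ[K] A)
    (hN : IsHomNovikov 𝒜 ε mul α)
    (hmult : ∀ x y : A, α (mul x y) = mul (α x) (α y)) (n : ℕ) :
    IsHomNovikov 𝒜 ε (mul.compr₂ (α ^ n)) (α ^ (n + 1)) ∧
    (∀ x y : A, (α ^ (n + 1)) (mul.compr₂ (α ^ n) x y)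
      = mul.compr₂ (α ^ n) ((α ^ (n + 1)) x) ((α ^ (n + 1)) y)) := by
  obtain ⟨hgr, hev, h1, h2⟩ := hN
  have hevk : ∀ k : ℕ, ∀ a : G, ∀ x ∈ 𝒜 a, (α ^ k) x ∈ 𝒜 a := by
    intro k
    induction k with
    | zero => intro a x hx; simpa using hx
    | succ k ih =>
      intro a x hx
      have : (α ^ (k + 1)) x = (α ^ k) (α x) := by
        rw [pow_succ]; rfl
      rw [this]; exact ih a (α x) (hev a x hx)
  have hmk : ∀ k : ℕ, ∀ x y : A, (α ^ k) (mul x y) = mul ((α ^ k) x) ((α ^ k) y) := by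
    intro k
    induction k with
    | zero => intro x y; simp
    | succ k ih =>
      intro x y
      have e : ∀ w : A, (α ^ (k + 1)) w = (α ^ k) (α w) := by
        intro w; rw [pow_succ]; rfl
      rw [e, hmult, ih, e, e]
  have hsucc : ∀ x : A, (α ^ (n + 1)) x = α ((α ^ n) x) := by
    intro x; rw [pow_succ']; rfl
  have hc : ∀ w : A, (α ^ n) (α w) = α ((α ^ n) w) := by
    intro w
    have e1 : (α ^ n) (α w) = (α ^ (n + 1)) w := by rw [pow_succ]; rfl
    rw [e1, hsucc]
  refine ⟨⟨?_, ?_, ?_, ?_⟩, ?_⟩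
  · intro a b x hx y hy
    simpa using hevk n (a + b) _ (hgr a b x hx y hy)
  · intro a x hx
    exact hevk (n + 1) a x hx
  · intro a b c x hx y hy z hz
    simp only [LinearMap.compr₂_apply, hmk n, hsucc, hc]
    exact h1 a b c _ (hevk n a _ (hevk n a x hx)) _ (hevk n b _ (hevk n b y hy))
      _ (hevk n c _ (hevk n c z hz))
  · intro a b c x hx y hy z hz
    simp only [LinearMap.compr₂_apply, hmk n, hsucc, hc]
    exact h2 a b c _ (hevk n a _ (hevk n a x hx)) _ (hevk n b _ (hevk n b y hy))
      _ (hevk n c _ (hevk n c z hz))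
  · intro x y
    simp only [LinearMap.compr₂_apply, hmk, hsucc, hmult, hc]
end

section
/- Let (A, ·, ε, α) be a Hom-Novikov color algebra and let β : A → A be an even linear map in the centroid, i.e. β∘α = α∘β and β(x·y) = β(x)·y = x·β(y) for all homogeneous x, y. Then A' = (A, β∘·, ε, α) (with product x ∗ y = β(x·y) and the same twisting map α) is a Hom-Novikov color algebra. -/
open scoped TensorProduct

variable {K G A : Type*}

/-- twisting a Hom-Novikov color algebra by an element `β` of its
centroid: `A' = (A, β∘·, ε, α)` is a Hom-Novikov color algebra. -/
theorem statement3 {K G A : Type*} [Field K] [AddCommGroup G] [DecidableEq G]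
    [AddCommGroup A] [Module K A]
    (𝒜 : G → Submodule K A) [DirectSum.Decomposition 𝒜]
    (ε : G → G → K) (hε : IsBicharacter ε)
    (mul : A →ₗ[K] A →ₗ[K] A) (α : A →ₗ[K] A)
    (hN : IsHomNovikov 𝒜 ε mul α)
    (β : A →ₗ[K] A) (hβeven : IsEven 𝒜 β) (hβα : β ∘ₗ α = α ∘ₗ β)
    (hβleft : ∀ a b : G, ∀ x ∈ 𝒜 a, ∀ y ∈ 𝒜 b, β (mul x y) = mul (β x) y)
    (hβright : ∀ a b : G, ∀ x ∈ 𝒜 a, ∀ y ∈ 𝒜 b, β (mul x y) = mul x (β y)) :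
    IsHomNovikov 𝒜 ε (mul.compr₂ β) α := by
  obtain ⟨hg, hα, hnov1, hnov2⟩ := hN
  refine ⟨?_, hα, ?_, ?_⟩
  · intro a b x hx y hy
    exact hβeven _ _ (hg a b x hx y hy)
  · intro a b c x hx y hy z hz
    have hxy := hg a b x hx y hy
    have hxz := hg a c x hx z hz
    have hαz := hα c z hz
    have hαy := hα b y hy
    simp only [LinearMap.compr₂_apply]
    rw [← hβleft _ _ _ hxy _ hαz, ← hβleft _ _ _ hxz _ hαy,
      hnov1 a b c x hx y hy z hz, map_smul, map_smul]
  · intro a b c x hx y hy z hz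
    have hxy := hg a b x hx y hy
    have hyx := hg b a y hy x hx
    have hyz := hg b c y hy z hz
    have hxz := hg a c x hx z hz
    have hαz := hα c z hz
    have hαx := hα a x hx
    have hαy := hα b y hy
    simp only [LinearMap.compr₂_apply]
    rw [← hβleft _ _ _ hxy _ hαz, ← hβright _ _ _ hαx _ hyz,
      ← hβleft _ _ _ hyx _ hαz, ← hβright _ _ _ hαy _ hxz,
      ← map_sub, ← map_sub, ← map_sub, ← map_sub,
      hnov2 a b c x hx y hy z hz, map_smul, map_smul]
end

section
/- Let (A, ·, ε, α) be a Hom-Novikov color algebra. Define the bracket [x, y] := x·y − ε(x,y) y·x for homogeneous x, y. Then HL(A) = (A, [·,·], ε, α) is a Hom-Lie color algebra; that is, every Hom-Novikov color algebra is Hom-Lie admissible. -/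
open scoped TensorProduct

variable {K G A : Type*}

/-- every Hom-Novikov color algebra is Hom-Lie admissible:
the `ε`-commutator `[x,y] = x·y − ε(x,y) y·x` makes `(A, [·,·], ε, α)`
a Hom-Lie color algebra. -/
theorem statement5 {K G A : Type*} [Field K] [AddCommGroup G] [DecidableEq G]
    [AddCommGroup A] [Module K A]
    (𝒜 : G → Submodule K A) [DirectSum.Decomposition 𝒜]
    (ε : G → G → K) (hε : IsBicharacter ε)
    (mul : A →ₗ[K] A →ₗ[K] A) (α : A →ₗ[K] A)
    (hN : IsHomNovikov 𝒜 ε mul α) :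
    (∀ a b : G, ∀ x ∈ 𝒜 a, ∀ y ∈ 𝒜 b, homBracket ε mul a b x y ∈ 𝒜 (a + b)) ∧
    (∀ a b : G, ∀ x ∈ 𝒜 a, ∀ y ∈ 𝒜 b,
      homBracket ε mul a b x y = -(ε a b • homBracket ε mul b a y x)) ∧
    (∀ a b c : G, ∀ x ∈ 𝒜 a, ∀ y ∈ 𝒜 b, ∀ z ∈ 𝒜 c,
      ε c a • homBracket ε mul a (b + c) (α x) (homBracket ε mul b c y z)
      + ε a b • homBracket ε mul b (c + a) (α y) (homBracket ε mul c a z x)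
      + ε b c • homBracket ε mul c (a + b) (α z) (homBracket ε mul a b x y)
        = 0) := by
  obtain ⟨hnz, hsym, hadd1, hadd2⟩ := hε
  obtain ⟨hgr, hev, hN1, hN2⟩ := hN
  refine ⟨?_, ?_, ?_⟩
  · intro a b x hx y hy
    exact sub_mem (hgr a b x hx y hy)
      (Submodule.smul_mem _ _ (by simpa [add_comm] using hgr b a y hy x hx))
  · intro a b x hx y hy
    simp only [homBracket, smul_sub, smul_smul, hsym a b, one_smul]
    abel
  · intro a b c x hx y hy z hz
    have h1 := hN2 a b c x hx y hy z hz
    have h2 := hN2 b c a y hy z hz x hx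
    have h3 := hN2 c a b z hz x hx y hy
    have e1 : ε c a * ε a c = 1 := hsym c a
    have e2 : ε a b * ε b a = 1 := hsym a b
    have e3 : ε b c * ε c b = 1 := hsym b c
    simp only [homBracket, map_sub, map_smul, LinearMap.sub_apply, LinearMap.smul_apply,
      hadd1, hadd2]
    linear_combination (norm := module)
      (-(ε c a) • h1) - (ε a b) • h2 - (ε b c) • h3
      - e3 • ((ε c a) • mul (mul x y) (α z))
      + e3 • ((ε c a * ε a b) • mul (mul y x) (α z))
      - e1 • ((ε a b) • mul (mul y z) (α x))
      + e1 • ((ε a b * ε b c) • mul (mul z y) (α x))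
      - e2 • ((ε b c) • mul (mul z x) (α y))
      + e2 • ((ε b c * ε c a) • mul (mul x z) (α y))
end

section
/- Let (A, ·, ε, α) be an involutive (α² = id) multiplicative Hom-Novikov color algebra. Then (A, α∘·, ε), i.e. A equipped with the product x ∗ y = α(x·y), is a Novikov color algebra (a Hom-Novikov color algebra with identity twisting map). -/
open scoped TensorProduct

variable {K G A : Type*}

/-- an involutive multiplicative Hom-Novikov color algebra yields a
Novikov color algebra `(A, α∘·, ε)` (Hom-Novikov with identity twisting map). -/
theorem statement6 {K G A : Type*} [Field K] [AddCommGroup G] [DecidableEq G]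
    [AddCommGroup A] [Module K A]
    (𝒜 : G → Submodule K A) [DirectSum.Decomposition 𝒜]
    (ε : G → G → K) (hε : IsBicharacter ε)
    (mul : A →ₗ[K] A →ₗ[K] A) (α : A →ₗ[K] A)
    (hN : IsHomNovikov 𝒜 ε mul α)
    (hinv : α ∘ₗ α = LinearMap.id)
    (hmult : ∀ x y : A, α (mul x y) = mul (α x) (α y)) :
    IsHomNovikov 𝒜 ε (mul.compr₂ α) LinearMap.id := by
  obtain ⟨hgr, heven, hnov1, hnov2⟩ := hN
  have hαα : ∀ w : A, α (α w) = w := fun w => by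
    have := DFunLike.congr_fun hinv w
    simpa using this
  have key1 : ∀ u v : A, α (mul (α u) v) = mul u (α v) := fun u v => by
    rw [hmult, hαα]
  have key2 : ∀ u v : A, α (mul u (α v)) = mul (α u) v := fun u v => by
    rw [hmult, hαα]
  refine ⟨?_, ?_, ?_, ?_⟩
  · intro a b x hx y hy
    exact heven _ _ (hgr a b x hx y hy)
  · intro a x hx
    exact hx
  · intro a b c x hx y hy z hz
    simp only [LinearMap.compr₂_apply, LinearMap.id_coe, id_eq]
    rw [key1, key1]
    exact hnov1 a b c x hx y hy z hz
  · intro a b c x hx y hy z hz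
    simp only [LinearMap.compr₂_apply, LinearMap.id_coe, id_eq]
    rw [key1, key2, key1, key2]
    exact hnov2 a b c x hx y hy z hz
end

section
/- Let (A, ·, ε, α) be a regular Hom-Novikov color algebra, i.e. α is bijective and α(x·y) = α(x)·α(y). Define [x, y] := x·y − ε(x,y) y·x for homogeneous x, y. Then (A, α^{-1}∘[·,·], ε), with bracket (x, y) ↦ α^{-1}([x,y]), is a Lie color algebra. In particular, if α is an involution (α² = id), then (A, α∘[·,·], ε) is a Lie color algebra. -/
/-!
The `ε`-commutator of a Hom-left-symmetric color algebra (in particular of a Hom-Novikov one)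
satisfies the Hom-Jacobi identity twisted by `α`. When `α` is a multiplicative bijection, its
inverse is again even (it commutes with the homogeneous projections) and multiplicative, hence
commutes with the commutator; so the Jacobi identity for `α⁻¹ ∘ [·,·]` at `x, y, z` is the
Hom-Jacobi identity at `α⁻² x, α⁻² y, α⁻² z`. An involution is its own inverse.
-/

open scoped TensorProduct

variable {K G A : Type*}

section HomNovikov

variable [Field K] [AddCommGroup A] [Module K A]

def IsHomLeftSymmetric (𝒜 : G → Submodule K A) (ε : G → G → K)
    (mul : A →ₗ[K] A →ₗ[K] A) (α : A →ₗ[K] A) : Prop :=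
  ∀ a b c : G, ∀ x ∈ 𝒜 a, ∀ y ∈ 𝒜 b, ∀ z ∈ 𝒜 c,
    mul (mul x y) (α z) - mul (α x) (mul y z)
      = ε a b • (mul (mul y x) (α z) - mul (α y) (mul x z))

theorem homBracket_antisymm {ε : G → G → K} (hε : ∀ a b, ε a b * ε b a = 1)
    (mul : A →ₗ[K] A →ₗ[K] A) (a b : G) (x y : A) :
    homBracket ε mul a b x y = -(ε a b • homBracket ε mul b a y x) := by
  simp only [homBracket, smul_sub, smul_smul, hε, one_smul]
  abel

theorem map_homBracket (ε : G → G → K) {mul : A →ₗ[K] A →ₗ[K] A} {f : A →ₗ[K] A}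
    (hf : ∀ x y, f (mul x y) = mul (f x) (f y)) (a b : G) (x y : A) :
    f (homBracket ε mul a b x y) = homBracket ε mul a b (f x) (f y) := by
  simp only [homBracket, map_sub, map_smul, hf]

theorem IsEven.map_decompose [DecidableEq G] {𝒜 : G → Submodule K A}
    [DirectSum.Decomposition 𝒜] {f : A →ₗ[K] A} (hf : IsEven 𝒜 f) (v : A) (c : G) :
    f (DirectSum.decompose 𝒜 v c) = DirectSum.decompose 𝒜 (f v) c := by
  induction v using DirectSum.Decomposition.inductionOn 𝒜 with
  | zero => simp
  | @homogeneous i m =>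
    by_cases hic : i = c
    · subst hic
      rw [DirectSum.decompose_of_mem_same 𝒜 m.2,
        DirectSum.decompose_of_mem_same 𝒜 (hf i m.1 m.2)]
    · rw [DirectSum.decompose_of_mem_ne 𝒜 m.2 hic,
        DirectSum.decompose_of_mem_ne 𝒜 (hf i m.1 m.2) hic, map_zero]
  | add u v hu hv =>
    simp only [map_add, DirectSum.decompose_add, DirectSum.add_apply, Submodule.coe_add, hu, hv]

theorem IsEven.of_inverse [DecidableEq G] {𝒜 : G → Submodule K A}
    [DirectSum.Decomposition 𝒜] {f g : A →ₗ[K] A} (hf : IsEven 𝒜 f)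
    (hgf : ∀ x, g (f x) = x) (hfg : ∀ x, f (g x) = x) : IsEven 𝒜 g := by
  intro c x hx
  have hproj : f (DirectSum.decompose 𝒜 (g x) c) = f (g x) := by
    rw [hf.map_decompose, hfg, DirectSum.decompose_of_mem_same 𝒜 hx]
  rw [← hgf (g x), ← hproj, hgf]
  exact SetLike.coe_mem _

variable [AddCommGroup G]

/-- `br a b x y` is the bracket of `x ∈ 𝒜 a` and `y ∈ 𝒜 b`: the degrees are explicit
arguments because `homBracket` depends on them. -/
def IsLieColorBracket (𝒜 : G → Submodule K A) (ε : G → G → K)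
    (br : G → G → A → A → A) : Prop :=
  (∀ a b : G, ∀ x ∈ 𝒜 a, ∀ y ∈ 𝒜 b, br a b x y ∈ 𝒜 (a + b)) ∧
  (∀ a b : G, ∀ x ∈ 𝒜 a, ∀ y ∈ 𝒜 b, br a b x y = -(ε a b • br b a y x)) ∧
  (∀ a b c : G, ∀ x ∈ 𝒜 a, ∀ y ∈ 𝒜 b, ∀ z ∈ 𝒜 c,
    ε c a • br a (b + c) x (br b c y z) + ε a b • br b (c + a) y (br c a z x)
      + ε b c • br c (a + b) z (br a b x y) = 0)

theorem homBracket_mem {𝒜 : G → Submodule K A} {mul : A →ₗ[K] A →ₗ[K] A}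
    (hmul : IsGradedMul 𝒜 mul) (ε : G → G → K) {a b : G} {x y : A}
    (hx : x ∈ 𝒜 a) (hy : y ∈ 𝒜 b) : homBracket ε mul a b x y ∈ 𝒜 (a + b) :=
  Submodule.sub_mem _ (hmul a b x hx y hy)
    (Submodule.smul_mem _ _ (add_comm b a ▸ hmul b a y hy x hx))

theorem IsHomLeftSymmetric.homJacobi {𝒜 : G → Submodule K A} {ε : G → G → K}
    {mul : A →ₗ[K] A →ₗ[K] A} {α : A →ₗ[K] A} (hL : IsHomLeftSymmetric 𝒜 ε mul α)
    (hε : IsBicharacter ε) {a b c : G} {x y z : A}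
    (hx : x ∈ 𝒜 a) (hy : y ∈ 𝒜 b) (hz : z ∈ 𝒜 c) :
    ε c a • homBracket ε mul a (b + c) (α x) (homBracket ε mul b c y z)
      + ε a b • homBracket ε mul b (c + a) (α y) (homBracket ε mul c a z x)
      + ε b c • homBracket ε mul c (a + b) (α z) (homBracket ε mul a b x y) = 0 := by
  obtain ⟨hne, hskew, hadd, -⟩ := hε
  have hinv : ∀ a b, ε b a = (ε a b)⁻¹ := fun a b => eq_inv_of_mul_eq_one_left (hskew b a)
  have := hne a b
  have := hne b c
  have := hne c a
  -- The twelve terms regroup into the three cyclic instances of left-symmetry.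
  have regroup :
      ε c a • homBracket ε mul a (b + c) (α x) (homBracket ε mul b c y z)
        + ε a b • homBracket ε mul b (c + a) (α y) (homBracket ε mul c a z x)
        + ε b c • homBracket ε mul c (a + b) (α z) (homBracket ε mul a b x y)
      = (-ε c a) • (mul (mul x y) (α z) - mul (α x) (mul y z)
            - ε a b • (mul (mul y x) (α z) - mul (α y) (mul x z)))
        + (-ε a b) • (mul (mul y z) (α x) - mul (α y) (mul z x)
            - ε b c • (mul (mul z y) (α x) - mul (α z) (mul y x)))
        + (-ε b c) • (mul (mul z x) (α y) - mul (α z) (mul x y)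
            - ε c a • (mul (mul x z) (α y) - mul (α x) (mul z y))) := by
    simp only [homBracket, hadd, hinv c a, hinv a b, hinv b c, map_sub, map_smul,
      LinearMap.sub_apply, LinearMap.smul_apply, smul_sub, smul_smul]
    match_scalars <;> field_simp
  rw [regroup, sub_eq_zero_of_eq (hL a b c x hx y hy z hz),
    sub_eq_zero_of_eq (hL b c a y hy z hz x hx), sub_eq_zero_of_eq (hL c a b z hz x hx y hy)]
  simp only [smul_zero, add_zero]

theorem isLieColorBracket_inv_comp_homBracket [DecidableEq G] (𝒜 : G → Submodule K A)
    [DirectSum.Decomposition 𝒜] (ε : G → G → K) (hε : IsBicharacter ε)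
    {mul : A →ₗ[K] A →ₗ[K] A} {α : A →ₗ[K] A} (hgr : IsGradedMul 𝒜 mul) (hα : IsEven 𝒜 α)
    (hL : IsHomLeftSymmetric 𝒜 ε mul α) (hmult : ∀ x y, α (mul x y) = mul (α x) (α y))
    (β : A →ₗ[K] A) (hβα : ∀ x, β (α x) = x) (hαβ : ∀ x, α (β x) = x) :
    IsLieColorBracket 𝒜 ε fun a b x y => β (homBracket ε mul a b x y) := by
  have hβ : IsEven 𝒜 β := hα.of_inverse hβα hαβ
  have hβmult : ∀ x y, β (mul x y) = mul (β x) (β y) := fun x y => by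
    rw [← hβα (mul (β x) (β y)), hmult, hαβ, hαβ]
  refine ⟨fun a b x hx y hy => hβ _ _ (homBracket_mem hgr ε hx hy),
    fun a b x _ y _ => by simp only [homBracket_antisymm hε.2.1 mul a b x y, map_neg, map_smul], ?_⟩
  intro a b c x hx y hy z hz
  -- Evaluate the Hom-Jacobi identity at `β² x, β² y, β² z`, using `α ∘ β = id`.
  have J := IsHomLeftSymmetric.homJacobi hL hε (hβ _ _ (hβ _ _ hx)) (hβ _ _ (hβ _ _ hy))
    (hβ _ _ (hβ _ _ hz))
  simp only [hαβ] at J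
  simpa only [map_homBracket ε hβmult] using J

end HomNovikov

theorem statement7_general {K G A : Type*} [Field K] [AddCommGroup G] [DecidableEq G]
    [AddCommGroup A] [Module K A]
    (𝒜 : G → Submodule K A) [DirectSum.Decomposition 𝒜]
    (ε : G → G → K) (hε : IsBicharacter ε)
    (mul : A →ₗ[K] A →ₗ[K] A) (α : A →ₗ[K] A)
    (hN : IsHomNovikov 𝒜 ε mul α)
    (hmult : ∀ x y : A, α (mul x y) = mul (α x) (α y))
    (α' : A →ₗ[K] A) (hα'₁ : ∀ x, α' (α x) = x) (hα'₂ : ∀ x, α (α' x) = x) :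
    ((∀ a b : G, ∀ x ∈ 𝒜 a, ∀ y ∈ 𝒜 b,
        α' (homBracket ε mul a b x y) ∈ 𝒜 (a + b)) ∧
     (∀ a b : G, ∀ x ∈ 𝒜 a, ∀ y ∈ 𝒜 b,
        α' (homBracket ε mul a b x y)
          = -(ε a b • α' (homBracket ε mul b a y x))) ∧
     (∀ a b c : G, ∀ x ∈ 𝒜 a, ∀ y ∈ 𝒜 b, ∀ z ∈ 𝒜 c,
        ε c a • α' (homBracket ε mul a (b + c) x (α' (homBracket ε mul b c y z)))
        + ε a b • α' (homBracket ε mul b (c + a) y (α' (homBracket ε mul c a z x)))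
        + ε b c • α' (homBracket ε mul c (a + b) z (α' (homBracket ε mul a b x y)))
          = 0)) ∧
    ((∀ x : A, α (α x) = x) →
      ((∀ a b : G, ∀ x ∈ 𝒜 a, ∀ y ∈ 𝒜 b,
          α (homBracket ε mul a b x y) ∈ 𝒜 (a + b)) ∧
       (∀ a b : G, ∀ x ∈ 𝒜 a, ∀ y ∈ 𝒜 b,
          α (homBracket ε mul a b x y)
            = -(ε a b • α (homBracket ε mul b a y x))) ∧
       (∀ a b c : G, ∀ x ∈ 𝒜 a, ∀ y ∈ 𝒜 b, ∀ z ∈ 𝒜 c,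
          ε c a • α (homBracket ε mul a (b + c) x (α (homBracket ε mul b c y z)))
          + ε a b • α (homBracket ε mul b (c + a) y (α (homBracket ε mul c a z x)))
          + ε b c • α (homBracket ε mul c (a + b) z (α (homBracket ε mul a b x y)))
            = 0))) := by
  obtain ⟨hgr, hα, -, hL⟩ := hN
  exact ⟨isLieColorBracket_inv_comp_homBracket 𝒜 ε hε hgr hα hL hmult α' hα'₁ hα'₂,
    fun hinv => isLieColorBracket_inv_comp_homBracket 𝒜 ε hε hgr hα hL hmult α hinv hinv⟩

/-- for a regular Hom-Novikov color algebra, `(A, α⁻¹∘[·,·], ε)` is a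
Lie color algebra; in particular if `α` is an involution, `(A, α∘[·,·], ε)` is a
Lie color algebra. Here `α'` is the (linear) inverse of `α`. -/
theorem statement7 {K G A : Type*} [Field K] [AddCommGroup G] [DecidableEq G]
    [AddCommGroup A] [Module K A]
    (𝒜 : G → Submodule K A) [DirectSum.Decomposition 𝒜]
    (ε : G → G → K) (hε : IsBicharacter ε)
    (mul : A →ₗ[K] A →ₗ[K] A) (α : A →ₗ[K] A)
    (hN : IsHomNovikov 𝒜 ε mul α)
    (hbij : Function.Bijective α)
    (hmult : ∀ x y : A, α (mul x y) = mul (α x) (α y))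
    (α' : A →ₗ[K] A) (hα'₁ : ∀ x, α' (α x) = x) (hα'₂ : ∀ x, α (α' x) = x) :
    ((∀ a b : G, ∀ x ∈ 𝒜 a, ∀ y ∈ 𝒜 b,
        α' (homBracket ε mul a b x y) ∈ 𝒜 (a + b)) ∧
     (∀ a b : G, ∀ x ∈ 𝒜 a, ∀ y ∈ 𝒜 b,
        α' (homBracket ε mul a b x y)
          = -(ε a b • α' (homBracket ε mul b a y x))) ∧
     (∀ a b c : G, ∀ x ∈ 𝒜 a, ∀ y ∈ 𝒜 b, ∀ z ∈ 𝒜 c,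
        ε c a • α' (homBracket ε mul a (b + c) x (α' (homBracket ε mul b c y z)))
        + ε a b • α' (homBracket ε mul b (c + a) y (α' (homBracket ε mul c a z x)))
        + ε b c • α' (homBracket ε mul c (a + b) z (α' (homBracket ε mul a b x y)))
          = 0)) ∧
    ((∀ x : A, α (α x) = x) →
      ((∀ a b : G, ∀ x ∈ 𝒜 a, ∀ y ∈ 𝒜 b,
          α (homBracket ε mul a b x y) ∈ 𝒜 (a + b)) ∧
       (∀ a b : G, ∀ x ∈ 𝒜 a, ∀ y ∈ 𝒜 b,
          α (homBracket ε mul a b x y)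
            = -(ε a b • α (homBracket ε mul b a y x))) ∧
       (∀ a b c : G, ∀ x ∈ 𝒜 a, ∀ y ∈ 𝒜 b, ∀ z ∈ 𝒜 c,
          ε c a • α (homBracket ε mul a (b + c) x (α (homBracket ε mul b c y z)))
          + ε a b • α (homBracket ε mul b (c + a) y (α (homBracket ε mul c a z x)))
          + ε b c • α (homBracket ε mul c (a + b) z (α (homBracket ε mul a b x y)))
            = 0))) :=
  statement7_general 𝒜 ε hε mul α hN hmult α' hα'₁ hα'₂
end

section
/- Let (A, ·, ε, α) be an ε-commutative Hom-Novikov color algebra (x·y = ε(x,y) y·x for homogeneous x, y) equipped with an averaging operator ∂, i.e. an even linear map with ∂∘α = α∘∂ and ∂(∂(x)·y) = ∂(x)·∂(y) = ∂(x·∂(y)) for all homogeneous x, y. Then A with the product x ∗ y := x·∂(y) and the same twisting map α is a Hom-Novikov color algebra. -/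
open scoped TensorProduct

variable {K G A : Type*}

/-- an ε-commutative Hom-Novikov color algebra with an averaging
operator `D` yields a Hom-Novikov color algebra with product `x ∗ y = x·D(y)`
and the same twisting map `α`. -/
theorem statement8 {K G A : Type*} [Field K] [AddCommGroup G] [DecidableEq G]
    [AddCommGroup A] [Module K A]
    (𝒜 : G → Submodule K A) [DirectSum.Decomposition 𝒜]
    (ε : G → G → K) (hε : IsBicharacter ε)
    (mul : A →ₗ[K] A →ₗ[K] A) (α : A →ₗ[K] A)
    (hN : IsHomNovikov 𝒜 ε mul α) (hcomm : IsEpsCommutative 𝒜 ε mul)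
    (D : A →ₗ[K] A) (hDeven : IsEven 𝒜 D) (hDα : D ∘ₗ α = α ∘ₗ D)
    (havg1 : ∀ a b : G, ∀ x ∈ 𝒜 a, ∀ y ∈ 𝒜 b,
      D (mul (D x) y) = mul (D x) (D y))
    (havg2 : ∀ a b : G, ∀ x ∈ 𝒜 a, ∀ y ∈ 𝒜 b,
      mul (D x) (D y) = D (mul x (D y))) :
    IsHomNovikov 𝒜 ε (mul.compl₂ D) α := by
  obtain ⟨hne, hsym, hadd1, hadd2⟩ := hε
  obtain ⟨hgr, hα, hnov1, hnov2⟩ := hN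
  have hDαz : ∀ z : A, D (α z) = α (D z) := fun z =>
    congrFun (congrArg DFunLike.coe hDα) z
  have star : ∀ a b c : G, ∀ x ∈ 𝒜 a, ∀ y ∈ 𝒜 b, ∀ z ∈ 𝒜 c,
      mul (α x) (mul y z) = ε a b • mul (mul y x) (α z) := by
    intro a b c x hx y hy z hz
    rw [hcomm a (b + c) (α x) (hα a x hx) (mul y z) (hgr b c y hy z hz),
      hnov1 b c a y hy z hz x hx, smul_smul, hadd1 a b c, mul_assoc,
      hsym a c, mul_one]
  refine ⟨?_, hα, ?_, ?_⟩
  · intro a b x hx y hy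
    exact hgr a b x hx (D y) (hDeven b y hy)
  · intro a b c x hx y hy z hz
    simp only [LinearMap.compl₂_apply, hDαz]
    exact hnov1 a b c x hx (D y) (hDeven b y hy) (D z) (hDeven c z hz)
  · intro a b c x hx y hy z hz
    have hDy := hDeven b y hy
    have hDz := hDeven c z hz
    have hDx := hDeven a x hx
    simp only [LinearMap.compl₂_apply, hDαz]
    rw [← havg2 b c y hy z hz, ← havg2 a c x hx z hz,
      star a b c x hx (D y) hDy (D z) hDz,
      star b a c y hy (D x) hDx (D z) hDz,
      hcomm a b x hx (D y) hDy, hcomm b a y hy (D x) hDx]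
    simp [LinearMap.map_smul, LinearMap.smul_apply]
end

section
/- Let (A, ·, ε, α) be an ε-commutative Hom-associative color algebra and let ∂ : A → A be an even derivation commuting with α, i.e. ∂(x·y) = ∂(x)·y + x·∂(y) for all homogeneous x, y and ∂∘α = α∘∂. Then (A, ∗, ε, α) with x ∗ y := x·∂(y) is a Hom-Novikov color algebra. -/
open scoped TensorProduct

variable {K G A : Type*}

/-- an ε-commutative Hom-associative color algebra with an even
derivation `D` commuting with `α` yields a Hom-Novikov color algebra with product
`x ∗ y = x·D(y)` and twisting map `α`. -/
theorem statement9 {K G A : Type*} [Field K] [AddCommGroup G] [DecidableEq G]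
    [AddCommGroup A] [Module K A]
    (𝒜 : G → Submodule K A) [DirectSum.Decomposition 𝒜]
    (ε : G → G → K) (hε : IsBicharacter ε)
    (mul : A →ₗ[K] A →ₗ[K] A) (α : A →ₗ[K] A)
    (hA : IsHomAssociative 𝒜 mul α) (hcomm : IsEpsCommutative 𝒜 ε mul)
    (D : A →ₗ[K] A) (hDeven : IsEven 𝒜 D) (hDα : D ∘ₗ α = α ∘ₗ D)
    (hder : ∀ a b : G, ∀ x ∈ 𝒜 a, ∀ y ∈ 𝒜 b,
      D (mul x y) = mul (D x) y + mul x (D y)) :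
    IsHomNovikov 𝒜 ε (mul.compl₂ D) α := by

  obtain ⟨hεne, hεsym, hεadd1, hεadd2⟩ := hε
  obtain ⟨hgr, hαeven, hassoc⟩ := hA
  have hDα' : ∀ v : A, D (α v) = α (D v) := fun v => LinearMap.congr_fun hDα v
  refine ⟨?_, hαeven, ?_, ?_⟩
  · intro a b x hx y hy
    exact hgr a b x hx (D y) (hDeven b y hy)
  · intro a b c x hx y hy z hz
    simp only [LinearMap.compl₂_apply]
    have hDy := hDeven b y hy
    have hDz := hDeven c z hz
    rw [hDα' z, hDα' y, ← hassoc a b c x hx (D y) hDy (D z) hDz,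
        hcomm b c (D y) hDy (D z) hDz, map_smul,
        hassoc a c b x hx (D z) hDz (D y) hDy]
  · intro a b c x hx y hy z hz
    simp only [LinearMap.compl₂_apply]
    have hDx := hDeven a x hx
    have hDy := hDeven b y hy
    have hDz := hDeven c z hz
    have hDDz := hDeven c _ hDz
    rw [hder b c y hy (D z) hDz, hder a c x hx (D z) hDz, map_add, map_add,
        hDα' z, ← hassoc a b c x hx (D y) hDy (D z) hDz,
        ← hassoc b a c y hy (D x) hDx (D z) hDz,
        hassoc a b c x hx y hy (D (D z)) hDDz,
        hassoc b a c y hy x hx (D (D z)) hDDz,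
        hcomm a b x hx y hy, LinearMap.map_smul₂]
    abel_nf
    rw [smul_comm]
end

section
/- Let (A, ·, ε) be an ε-commutative associative color algebra, let α : A → A be an even algebra morphism (α(x·y) = α(x)·α(y)), and let ∂ be an even derivation of A commuting with α. Then (A, ∗, ε, α) with x ∗ y := α(x·∂(y)) is a Hom-Novikov color algebra. -/
open scoped TensorProduct

variable {K G A : Type*}

/-- an ε-commutative associative color algebra with an even algebra
morphism `α` and an even derivation `D` commuting with `α` yields a Hom-Novikov
color algebra with product `x ∗ y = α(x·D(y))` and twisting map `α`. -/
theorem statement10 {K G A : Type*} [Field K] [AddCommGroup G] [DecidableEq G]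
    [AddCommGroup A] [Module K A]
    (𝒜 : G → Submodule K A) [DirectSum.Decomposition 𝒜]
    (ε : G → G → K) (hε : IsBicharacter ε)
    (mul : A →ₗ[K] A →ₗ[K] A)
    (hgr : IsGradedMul 𝒜 mul)
    (hassoc : ∀ a b c : G, ∀ x ∈ 𝒜 a, ∀ y ∈ 𝒜 b, ∀ z ∈ 𝒜 c,
      mul (mul x y) z = mul x (mul y z))
    (hcomm : IsEpsCommutative 𝒜 ε mul)
    (α : A →ₗ[K] A) (hαeven : IsEven 𝒜 α)
    (hαmul : ∀ x y : A, α (mul x y) = mul (α x) (α y))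
    (D : A →ₗ[K] A) (hDeven : IsEven 𝒜 D) (hDα : D ∘ₗ α = α ∘ₗ D)
    (hder : ∀ a b : G, ∀ x ∈ 𝒜 a, ∀ y ∈ 𝒜 b,
      D (mul x y) = mul (D x) y + mul x (D y)) :
    IsHomNovikov 𝒜 ε ((mul.compl₂ D).compr₂ α) α := by
  have hD : ∀ x : A, D (α x) = α (D x) := fun x => congrFun (congrArg DFunLike.coe hDα) x
  refine ⟨?_, hαeven, ?_, ?_⟩
  · intro a b x hx y hy
    simp only [LinearMap.compr₂_apply, LinearMap.compl₂_apply]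
    exact hαeven _ _ (hgr a b x hx (D y) (hDeven b y hy))
  · intro a b c x hx y hy z hz
    simp only [LinearMap.compr₂_apply, LinearMap.compl₂_apply]
    simp only [hD, ← hαmul]
    rw [hassoc a b c x hx (D y) (hDeven b y hy) (D z) (hDeven c z hz),
      hassoc a c b x hx (D z) (hDeven c z hz) (D y) (hDeven b y hy),
      hcomm b c (D y) (hDeven b y hy) (D z) (hDeven c z hz)]
    simp only [map_smul]
  · intro a b c x hx y hy z hz
    simp only [LinearMap.compr₂_apply, LinearMap.compl₂_apply]
    simp only [hD]
    rw [hder b c y hy (D z) (hDeven c z hz), hder a c x hx (D z) (hDeven c z hz)]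
    simp only [map_add, ← hαmul]
    rw [hassoc a b c x hx (D y) (hDeven b y hy) (D z) (hDeven c z hz),
      hassoc b a c y hy (D x) (hDeven a x hx) (D z) (hDeven c z hz)]
    have hz2 : D (D z) ∈ 𝒜 c := hDeven c _ (hDeven c z hz)
    have key : mul x (mul y (D (D z))) = ε a b • mul y (mul x (D (D z))) := by
      rw [← hassoc a b c x hx y hy _ hz2, ← hassoc b a c y hy x hx _ hz2,
        hcomm a b x hx y hy]
      simp only [map_smul, LinearMap.smul_apply]
    rw [key]
    simp only [map_smul, smul_sub, smul_add]
    abel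
end

section
/- Let (L, [·,·], ε, α) be a multiplicative Hom-Lie color algebra and f : L → L an even linear map with f∘α = α∘f. Define x ∗ y := [f(x), y], and let Z(α(L)) = {u ∈ L : [u, α(y)] = 0 for all y ∈ L}. Then (L, ∗, ε, α) is a Hom-Novikov color algebra if and only if for all homogeneous x, y, z: (i) f([f(x),y] + [x,f(y)]) − [f(x),f(y)] ∈ Z(α(L)), and (ii) [f([f(x),y]), α(z)] = ε(y,z)[f([f(x),z]), α(y)]. -/
/-!
Put `x ∗ y = [f x, y]`. The first Novikov identity for `∗` is literally condition (ii). For the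
second one, the Hom-Jacobi identity, read as a Hom-Leibniz rule for `[f x, ·]` and `[f y, ·]`,
collapses the difference of the two sides to `[D(x, y), α z]`, where
`D(x, y) = f([f x, y] + [x, f y]) − [f x, f y]` measures how far `f` is from a Rota–Baxter
operator of weight zero. Since every element of `L` is a sum of homogeneous ones, this vanishes
for all homogeneous `z` exactly when `D(x, y)` lies in `Z(α(L))`.
-/

open scoped TensorProduct

variable {K G A : Type*}

theorem DirectSum.Decomposition.linearMap_eq_zero {M : Type*} [Field K] [DecidableEq G]
    [AddCommGroup A] [Module K A] [AddCommGroup M] [Module K M]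
    (𝒜 : G → Submodule K A) [DirectSum.Decomposition 𝒜] (g : A →ₗ[K] M)
    (h : ∀ a, ∀ x ∈ 𝒜 a, g x = 0) : g = 0 :=
  LinearMap.ext fun v => DirectSum.Decomposition.inductionOn 𝒜 (motive := fun v => g v = 0)
    (map_zero g) (fun m => h _ m m.2) (fun m m' hm hm' => by rw [map_add, hm, hm', add_zero]) v

section HomLie

variable [Field K] [AddCommGroup G] [AddCommGroup A] [Module K A]
  {𝒜 : G → Submodule K A} {ε : G → G → K} {br : A →ₗ[K] A →ₗ[K] A} {α : A →ₗ[K] A}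

theorem IsGradedMul.comp_isEven (hbr : IsGradedMul 𝒜 br) {f : A →ₗ[K] A} (hf : IsEven 𝒜 f) :
    IsGradedMul 𝒜 (br ∘ₗ f) :=
  fun a b x hx y hy => hbr a b (f x) (hf a x hx) y hy

theorem IsHomLie.hom_leibniz (hε : IsBicharacter ε) (hL : IsHomLie 𝒜 ε br α)
    {a b c : G} {x y z : A} (hx : x ∈ 𝒜 a) (hy : y ∈ 𝒜 b) (hz : z ∈ 𝒜 c) :
    br (α x) (br y z) - ε a b • br (α y) (br x z) = br (br x y) (α z) := by
  obtain ⟨hne, hsym, haddR, -⟩ := hε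
  obtain ⟨hgr, hαe, hskew, hjac⟩ := hL
  have J := hjac a b c x hx y hy z hz
  rw [hskew c a z hz x hx, hskew c (a + b) (α z) (hαe c z hz) (br x y) (hgr a b x hx y hy)] at J
  simp only [map_neg, map_smul, smul_neg, smul_smul] at J
  have hcoef : ε b c * ε c (a + b) = ε c a := by
    rw [haddR c a b, mul_comm (ε c a), ← mul_assoc, hsym b c, one_mul]
  rw [hcoef] at J
  refine smul_right_injective A (hne c a) ?_
  linear_combination (norm := module) J

def rotaBaxterDefect (br : A →ₗ[K] A →ₗ[K] A) (f : A →ₗ[K] A) (x y : A) : A :=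
  f (br (f x) y + br x (f y)) - br (f x) (f y)

theorem IsHomLie.novikov_sub_eq_br_rotaBaxterDefect (hε : IsBicharacter ε)
    (hL : IsHomLie 𝒜 ε br α) {f : A →ₗ[K] A} (hfeven : IsEven 𝒜 f) (hfα : f ∘ₗ α = α ∘ₗ f)
    {a b c : G} {x y z : A} (hx : x ∈ 𝒜 a) (hy : y ∈ 𝒜 b) (hz : z ∈ 𝒜 c) :
    (br ∘ₗ f) ((br ∘ₗ f) x y) (α z) - (br ∘ₗ f) (α x) ((br ∘ₗ f) y z)
        - ε a b • ((br ∘ₗ f) ((br ∘ₗ f) y x) (α z) - (br ∘ₗ f) (α y) ((br ∘ₗ f) x z))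
      = br (rotaBaxterDefect br f x y) (α z) := by
  have hleib := hL.hom_leibniz hε (hfeven a x hx) (hfeven b y hy) hz
  obtain ⟨-, -, hskew, -⟩ := hL
  rw [rotaBaxterDefect, hskew a b x hx (f y) (hfeven b y hy)]
  simp only [LinearMap.comp_apply, ← LinearMap.comp_apply f α, hfα]
  simp only [map_add, map_neg, map_smul, map_sub, LinearMap.add_apply, LinearMap.sub_apply,
    LinearMap.neg_apply, LinearMap.smul_apply, smul_sub]
  linear_combination (norm := module) -hleib

end HomLie

theorem statement11_general {K G A : Type*} [Field K] [AddCommGroup G] [DecidableEq G]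
    [AddCommGroup A] [Module K A]
    (𝒜 : G → Submodule K A) [DirectSum.Decomposition 𝒜]
    (ε : G → G → K) (hε : IsBicharacter ε)
    (br : A →ₗ[K] A →ₗ[K] A) (α : A →ₗ[K] A)
    (hL : IsHomLie 𝒜 ε br α)
    (f : A →ₗ[K] A) (hfeven : IsEven 𝒜 f) (hfα : f ∘ₗ α = α ∘ₗ f) :
    IsHomNovikov 𝒜 ε (br ∘ₗ f) α ↔
      ((∀ a b : G, ∀ x ∈ 𝒜 a, ∀ y ∈ 𝒜 b,
          f (br (f x) y + br x (f y)) - br (f x) (f y)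
            ∈ {u : A | ∀ v : A, br u (α v) = 0}) ∧
       (∀ a b c : G, ∀ x ∈ 𝒜 a, ∀ y ∈ 𝒜 b, ∀ z ∈ 𝒜 c,
          br (f (br (f x) y)) (α z) = ε b c • br (f (br (f x) z)) (α y))) := by
  constructor
  · rintro ⟨-, -, hN1, hN2⟩
    refine ⟨fun a b x hx y hy v => ?_, hN1⟩
    have hcomp := DirectSum.Decomposition.linearMap_eq_zero 𝒜
      (br (rotaBaxterDefect br f x y) ∘ₗ α) fun c z hz => by
        rw [LinearMap.comp_apply, ← hL.novikov_sub_eq_br_rotaBaxterDefect hε hfeven hfα hx hy hz,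
          hN2 a b c x hx y hy z hz, sub_self]
    exact LinearMap.congr_fun hcomp v
  · rintro ⟨hcenter, hN1⟩
    refine ⟨hL.1.comp_isEven hfeven, hL.2.1, hN1,
      fun a b c x hx y hy z hz => sub_eq_zero.mp ?_⟩
    rw [hL.novikov_sub_eq_br_rotaBaxterDefect hε hfeven hfα hx hy hz]
    exact hcenter a b x hx y hy z

/-- for a multiplicative Hom-Lie color algebra `(L,[·,·],ε,α)` and an
even linear map `f` commuting with `α`, the product `x ∗ y = [f(x), y]` gives a
Hom-Novikov color algebra iff conditions (i) (membership in `Z(α(L))`) and (ii)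
hold for all homogeneous `x, y, z`. -/
theorem statement11 {K G A : Type*} [Field K] [AddCommGroup G] [DecidableEq G]
    [AddCommGroup A] [Module K A]
    (𝒜 : G → Submodule K A) [DirectSum.Decomposition 𝒜]
    (ε : G → G → K) (hε : IsBicharacter ε)
    (br : A →ₗ[K] A →ₗ[K] A) (α : A →ₗ[K] A)
    (hL : IsHomLie 𝒜 ε br α)
    (hmult : ∀ x y : A, α (br x y) = br (α x) (α y))
    (f : A →ₗ[K] A) (hfeven : IsEven 𝒜 f) (hfα : f ∘ₗ α = α ∘ₗ f) :
    IsHomNovikov 𝒜 ε (br ∘ₗ f) α ↔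
      ((∀ a b : G, ∀ x ∈ 𝒜 a, ∀ y ∈ 𝒜 b,
          f (br (f x) y + br x (f y)) - br (f x) (f y)
            ∈ {u : A | ∀ v : A, br u (α v) = 0}) ∧
       (∀ a b c : G, ∀ x ∈ 𝒜 a, ∀ y ∈ 𝒜 b, ∀ z ∈ 𝒜 c,
          br (f (br (f x) y)) (α z) = ε b c • br (f (br (f x) z)) (α y))) :=
  statement11_general 𝒜 ε hε br α hL f hfeven hfα
end

section
/- Let (L, [·,·], ε, α, R) be a multiplicative Rota-Baxter Hom-Lie color algebra of weight 0 (R even linear, R∘α = α∘R, [R(x),R(y)] = R([R(x),y] + [x,R(y)]) for homogeneous x, y) such that [R([R(x),y]), α(z)] = ε(y,z)[R([R(x),z]), α(y)] for all homogeneous x, y, z. Then (L, ∗, ε, α) with x ∗ y := [R(x), y] is a Hom-Novikov color algebra. -/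
open scoped TensorProduct

variable {K G A : Type*}

/-- a multiplicative Rota-Baxter Hom-Lie color algebra of weight `0`
satisfying the compatibility condition yields a Hom-Novikov color algebra with
product `x ∗ y = [R(x), y]`. -/
theorem statement12 {K G A : Type*} [Field K] [AddCommGroup G] [DecidableEq G]
    [AddCommGroup A] [Module K A]
    (𝒜 : G → Submodule K A) [DirectSum.Decomposition 𝒜]
    (ε : G → G → K) (hε : IsBicharacter ε)
    (br : A →ₗ[K] A →ₗ[K] A) (α : A →ₗ[K] A)
    (hL : IsHomLie 𝒜 ε br α)
    (hmult : ∀ x y : A, α (br x y) = br (α x) (α y))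
    (R : A →ₗ[K] A) (hReven : IsEven 𝒜 R) (hRα : R ∘ₗ α = α ∘ₗ R)
    (hRB : ∀ a b : G, ∀ x ∈ 𝒜 a, ∀ y ∈ 𝒜 b,
      br (R x) (R y) = R (br (R x) y + br x (R y)))
    (hcompat : ∀ a b c : G, ∀ x ∈ 𝒜 a, ∀ y ∈ 𝒜 b, ∀ z ∈ 𝒜 c,
      br (R (br (R x) y)) (α z) = ε b c • br (R (br (R x) z)) (α y)) :
    IsHomNovikov 𝒜 ε (br ∘ₗ R) α := by
  obtain ⟨hgr, hα, hskew, hjac⟩ := hL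
  have hRa : ∀ u : A, R (α u) = α (R u) := fun u => LinearMap.congr_fun hRα u
  refine ⟨?_, hα, ?_, ?_⟩
  · intro a b x hx y hy
    simpa using hgr a b (R x) (hReven a x hx) y hy
  · intro a b c x hx y hy z hz
    simpa using hcompat a b c x hx y hy z hz
  · intro a b c x hx y hy z hz
    simp only [LinearMap.comp_apply]
    have hRx := hReven a x hx
    have hRy := hReven b y hy
    -- Step A: from Jacobi
    have hjz := hjac a b c (R x) hRx (R y) hRy z hz
    have h1 : br z (R x) = -(ε c a • br (R x) z) := hskew c a z hz (R x) hRx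
    have h2 : br (α z) (br (R x) (R y)) = -(ε c (a + b) • br (br (R x) (R y)) (α z)) :=
      hskew c (a + b) (α z) (hα c z hz) _ (hgr a b _ hRx _ hRy)
    rw [h1, h2] at hjz
    have hbc : ε b c * ε c (a + b) = ε c a := by
      rw [hε.2.2.1 c a b]
      calc ε b c * (ε c a * ε c b) = ε c a * (ε b c * ε c b) := by ring
        _ = ε c a := by rw [hε.2.1 b c, mul_one]
    simp only [map_neg, map_smul, smul_neg, smul_smul, hbc] at hjz
    have hA : br (br (R x) (R y)) (α z)
        = br (α (R x)) (br (R y) z) - ε a b • br (α (R y)) (br (R x) z) := by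
      have key : ε c a • (br (α (R x)) (br (R y) z)
          - ε a b • br (α (R y)) (br (R x) z) - br (br (R x) (R y)) (α z)) = 0 := by
        rw [smul_sub, smul_sub, smul_smul]
        calc ε c a • br (α (R x)) (br (R y) z) - (ε c a * ε a b) • br (α (R y)) (br (R x) z)
              - ε c a • br (br (R x) (R y)) (α z)
            = ε c a • br (α (R x)) (br (R y) z) + -((ε a b * ε c a) • br (α (R y)) (br (R x) z))
              + -(ε c a • br (br (R x) (R y)) (α z)) := by rw [mul_comm (ε c a)]; abel
          _ = 0 := hjz
      rcases smul_eq_zero.mp key with h | h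
      · exact absurd h (hε.1 c a)
      · rw [sub_eq_zero] at h
        exact h.symm
    -- Step B: Rota-Baxter
    have hB : R (br (R x) y) = br (R x) (R y) - R (br x (R y)) := by
      rw [eq_sub_iff_add_eq, ← map_add]
      exact (hRB a b x hx y hy).symm
    -- Step C: skew-symmetry
    have hC : br x (R y) = -(ε a b • br (R y) x) := hskew a b x hx (R y) hRy
    rw [hB, hC, map_neg, map_smul, sub_neg_eq_add, map_add, map_smul, LinearMap.add_apply,
      LinearMap.smul_apply, hA, hRa x, hRa y, smul_sub]
    abel
end

section
/- Let (A, ·, ε, α_A) be an ε-commutative Hom-associative color algebra and (S, ∗, ε, α_S) a Hom-Novikov color algebra, both graded by the same abelian group G with the same bicharacter ε. Then S ⊗ A, with the grading (S⊗A)_c = ⊕_{a+b=c} S_a ⊗ A_b, the product (x⊗a) ⋆ (y⊗b) := ε(a,y) (x∗y) ⊗ (a·b) for homogeneous x, y ∈ S and a, b ∈ A, and the twisting map α_S ⊗ α_A, is a Hom-Novikov color algebra. -/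
open scoped TensorProduct

variable {K G A : Type*}

/-!
Each homogeneous component of `S ⊗ A` is spanned by pure tensors `x ⊗ u` of homogeneous factors,
and both Novikov identities are trilinear, so it suffices to check them on such tensors. There
every twisted triple product is a Koszul sign times an `S`-part tensored with an `A`-part.
Hom-associativity of `A` makes the `A`-parts of the two terms of the Hom-associator both equal to
`(u·v)·α(w)`, and together with `ε`-commutativity it gives `(u·v)·α(w) = ε(v,w) (u·w)·α(v)`.
Each identity thus reduces to the same identity in `S`, up to an equation between products of
values of `ε` that follows from skew-symmetry.
-/

namespace LinearMap

variable {R M₁ M₂ M₃ N : Type*} [CommSemiring R] [AddCommMonoid M₁] [Module R M₁]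
  [AddCommMonoid M₂] [Module R M₂] [AddCommMonoid M₃] [Module R M₃] [AddCommMonoid N] [Module R N]

theorem eqOn_span₃ {F G : M₁ →ₗ[R] M₂ →ₗ[R] M₃ →ₗ[R] N} {s₁ : Set M₁} {s₂ : Set M₂}
    {s₃ : Set M₃} (h : ∀ x ∈ s₁, ∀ y ∈ s₂, ∀ z ∈ s₃, F x y z = G x y z)
    {x : M₁} {y : M₂} {z : M₃} (hx : x ∈ Submodule.span R s₁) (hy : y ∈ Submodule.span R s₂)
    (hz : z ∈ Submodule.span R s₃) : F x y z = G x y z := by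
  have h₃ : ∀ x ∈ s₁, ∀ y ∈ s₂, F x y z = G x y z := fun x hx y hy =>
    eqOn_span (f := F x y) (g := G x y) (h x hx y hy) hz
  have h₂ : ∀ x ∈ s₁, F x y z = G x y z := fun x hx =>
    eqOn_span (f := (F x).flip z) (g := (G x).flip z) (h₃ x hx) hy
  exact eqOn_span (f := (F.flip y).flip z) (g := (G.flip y).flip z) h₂ hx

-- `mulMulTwist μ α x y z = μ (μ x y) (α z)` and `twistMulMul μ α x y z = μ (α x) (μ y z)`.
section TwistedProducts

variable {M : Type*} [AddCommMonoid M] [Module R M]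

def mulMulTwist (μ : M →ₗ[R] M →ₗ[R] M) (α : M →ₗ[R] M) : M →ₗ[R] M →ₗ[R] M →ₗ[R] M :=
  μ.compr₂ (μ.compl₂ α)

def twistMulMul (μ : M →ₗ[R] M →ₗ[R] M) (α : M →ₗ[R] M) : M →ₗ[R] M →ₗ[R] M →ₗ[R] M :=
  lcomp R _ μ ∘ₗ llcomp R M M M ∘ₗ μ ∘ₗ α

end TwistedProducts

variable {M : Type*} [AddCommGroup M] [Module R M]

def homAssociator (μ : M →ₗ[R] M →ₗ[R] M) (α : M →ₗ[R] M) : M →ₗ[R] M →ₗ[R] M →ₗ[R] M :=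
  mulMulTwist μ α - twistMulMul μ α

theorem homAssociator_apply (μ : M →ₗ[R] M →ₗ[R] M) (α : M →ₗ[R] M) (x y z : M) :
    homAssociator μ α x y z = μ (μ x y) (α z) - μ (α x) (μ y z) := rfl

end LinearMap

section TensorGrading

variable {R S : Type*} [CommSemiring R] [AddCommMonoid G]
  [AddCommMonoid S] [Module R S] [AddCommMonoid A] [Module R A]
  (𝒮 : G → Submodule R S) (𝒜 : G → Submodule R A)

def tensorGrading (c : G) : Submodule R (S ⊗[R] A) :=
  ⨆ (p : G × G) (_ : p.1 + p.2 = c),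
    LinearMap.range (TensorProduct.map (𝒮 p.1).subtype (𝒜 p.2).subtype)

def homogeneousTmuls (c : G) : Set (S ⊗[R] A) :=
  {t | ∃ a b, a + b = c ∧ ∃ x ∈ 𝒮 a, ∃ u ∈ 𝒜 b, x ⊗ₜ[R] u = t}

theorem tensorGrading_eq_span (c : G) :
    tensorGrading 𝒮 𝒜 c = Submodule.span R (homogeneousTmuls 𝒮 𝒜 c) := by
  simp_rw [tensorGrading, TensorProduct.range_map_eq_span_tmul, ← Submodule.span_iUnion₂]
  congr 1
  ext t
  simp [homogeneousTmuls]

theorem tmul_mem_tensorGrading {a b : G} {x : S} (hx : x ∈ 𝒮 a) {u : A} (hu : u ∈ 𝒜 b) :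
    x ⊗ₜ[R] u ∈ tensorGrading 𝒮 𝒜 (a + b) := by
  rw [tensorGrading_eq_span]
  exact Submodule.subset_span ⟨a, b, rfl, x, hx, u, hu, rfl⟩

end TensorGrading

section ColorTensorProduct

open LinearMap

variable {S : Type*} [Field K] [AddCommGroup G] [AddCommGroup S] [Module K S]
  [AddCommGroup A] [Module K A] {𝒮 : G → Submodule K S} {𝒜 : G → Submodule K A}
  {ε : G → G → K} {mulS : S →ₗ[K] S →ₗ[K] S} {mulA : A →ₗ[K] A →ₗ[K] A}
  {mulT : (S ⊗[K] A) →ₗ[K] (S ⊗[K] A) →ₗ[K] (S ⊗[K] A)}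
  {αS : S →ₗ[K] S} {αA : A →ₗ[K] A}

variable (𝒮 𝒜 ε mulS mulA mulT) in
def IsColorTensorMul : Prop :=
  ∀ a b c d : G, ∀ x ∈ 𝒮 a, ∀ u ∈ 𝒜 b, ∀ y ∈ 𝒮 c, ∀ v ∈ 𝒜 d,
    mulT (x ⊗ₜ[K] u) (y ⊗ₜ[K] v) = ε b c • (mulS x y ⊗ₜ[K] mulA u v)

theorem IsGradedMul.tensor (hS : IsGradedMul 𝒮 mulS) (hA : IsGradedMul 𝒜 mulA)
    (hmulT : IsColorTensorMul 𝒮 𝒜 ε mulS mulA mulT) :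
    IsGradedMul (tensorGrading 𝒮 𝒜) mulT := by
  intro a b X hX Y hY
  rw [tensorGrading_eq_span] at hX hY
  refine LinearMap.BilinMap.apply_apply_mem_of_mem_span _ _ _ mulT ?_ X Y hX hY
  rintro _ ⟨a₁, a₂, rfl, x, hx, u, hu, rfl⟩ _ ⟨b₁, b₂, rfl, y, hy, v, hv, rfl⟩
  rw [hmulT a₁ a₂ b₁ b₂ x hx u hu y hy v hv, add_add_add_comm]
  exact Submodule.smul_mem _ _ (tmul_mem_tensorGrading 𝒮 𝒜 (hS _ _ x hx y hy) (hA _ _ u hu v hv))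

theorem IsEven.tensorMap (hS : IsEven 𝒮 αS) (hA : IsEven 𝒜 αA) :
    IsEven (tensorGrading 𝒮 𝒜) (TensorProduct.map αS αA) := by
  intro c X hX
  rw [tensorGrading_eq_span] at hX
  refine (Submodule.map_span_le _ _ _).2 ?_ (Submodule.mem_map_of_mem hX)
  rintro _ ⟨a, b, rfl, x, hx, u, hu, rfl⟩
  exact tmul_mem_tensorGrading 𝒮 𝒜 (hS a x hx) (hA b u hu)

theorem IsHomAssociative.mul_mul_right_comm (hA : IsHomAssociative 𝒜 mulA αA)
    (hcomm : IsEpsCommutative 𝒜 ε mulA) {a b c : G} {u v w : A} (hu : u ∈ 𝒜 a) (hv : v ∈ 𝒜 b)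
    (hw : w ∈ 𝒜 c) : mulA (mulA u v) (αA w) = ε b c • mulA (mulA u w) (αA v) := by
  rw [← hA.2.2 a b c u hu v hv w hw, hcomm b c v hv w hw, map_smul, hA.2.2 a c b u hu w hw v hv]

variable {a₁ a₂ b₁ b₂ c₁ c₂ : G} {x y z : S} {u v w : A}

-- The sign `ε(u,y) ε(u,z) ε(v,z)` comes from moving `u` past `y, z` and `v` past `z`.
theorem mul_mul_map_tmul (hε : IsBicharacter ε) (hmulT : IsColorTensorMul 𝒮 𝒜 ε mulS mulA mulT)
    (hSg : IsGradedMul 𝒮 mulS) (hSe : IsEven 𝒮 αS) (hAg : IsGradedMul 𝒜 mulA) (hAe : IsEven 𝒜 αA)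
    (hx : x ∈ 𝒮 a₁) (hu : u ∈ 𝒜 a₂) (hy : y ∈ 𝒮 b₁) (hv : v ∈ 𝒜 b₂) (hz : z ∈ 𝒮 c₁)
    (hw : w ∈ 𝒜 c₂) :
    mulT (mulT (x ⊗ₜ u) (y ⊗ₜ v)) (TensorProduct.map αS αA (z ⊗ₜ w)) =
      (ε a₂ b₁ * ε a₂ c₁ * ε b₂ c₁) •
        (mulS (mulS x y) (αS z) ⊗ₜ[K] mulA (mulA u v) (αA w)) := by
  rw [TensorProduct.map_tmul, hmulT _ _ _ _ x hx u hu y hy v hv, map_smul,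
    LinearMap.smul_apply, hmulT _ _ _ _ _ (hSg _ _ x hx y hy) _ (hAg _ _ u hu v hv) _
      (hSe _ z hz) _ (hAe _ w hw), smul_smul, hε.2.2.2, ← mul_assoc]

theorem map_mul_mul_tmul (hε : IsBicharacter ε) (hmulT : IsColorTensorMul 𝒮 𝒜 ε mulS mulA mulT)
    (hSg : IsGradedMul 𝒮 mulS) (hSe : IsEven 𝒮 αS) (hAg : IsGradedMul 𝒜 mulA) (hAe : IsEven 𝒜 αA)
    (hx : x ∈ 𝒮 a₁) (hu : u ∈ 𝒜 a₂) (hy : y ∈ 𝒮 b₁) (hv : v ∈ 𝒜 b₂) (hz : z ∈ 𝒮 c₁)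
    (hw : w ∈ 𝒜 c₂) :
    mulT (TensorProduct.map αS αA (x ⊗ₜ u)) (mulT (y ⊗ₜ v) (z ⊗ₜ w)) =
      (ε a₂ b₁ * ε a₂ c₁ * ε b₂ c₁) •
        (mulS (αS x) (mulS y z) ⊗ₜ[K] mulA (αA u) (mulA v w)) := by
  rw [TensorProduct.map_tmul, hmulT _ _ _ _ y hy v hv z hz w hw, map_smul,
    hmulT _ _ _ _ _ (hSe _ x hx) _ (hAe _ u hu) _ (hSg _ _ y hy z hz) _ (hAg _ _ v hv w hw),
    smul_smul, hε.2.2.1, mul_comm (ε b₂ c₁)]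

theorem homAssociator_tmul (hε : IsBicharacter ε)
    (hmulT : IsColorTensorMul 𝒮 𝒜 ε mulS mulA mulT) (hSg : IsGradedMul 𝒮 mulS)
    (hSe : IsEven 𝒮 αS) (hA : IsHomAssociative 𝒜 mulA αA)
    (hx : x ∈ 𝒮 a₁) (hu : u ∈ 𝒜 a₂) (hy : y ∈ 𝒮 b₁) (hv : v ∈ 𝒜 b₂) (hz : z ∈ 𝒮 c₁)
    (hw : w ∈ 𝒜 c₂) :
    homAssociator mulT (TensorProduct.map αS αA) (x ⊗ₜ u) (y ⊗ₜ v) (z ⊗ₜ w) =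
      (ε a₂ b₁ * ε a₂ c₁ * ε b₂ c₁) •
        (homAssociator mulS αS x y z ⊗ₜ[K] mulA (mulA u v) (αA w)) := by
  rw [homAssociator_apply, homAssociator_apply,
    mul_mul_map_tmul hε hmulT hSg hSe hA.1 hA.2.1 hx hu hy hv hz hw,
    map_mul_mul_tmul hε hmulT hSg hSe hA.1 hA.2.1 hx hu hy hv hz hw,
    hA.2.2 _ _ _ u hu v hv w hw, ← smul_sub, ← TensorProduct.sub_tmul]

variable {a b c : G} {X Y Z : S ⊗[K] A}

theorem IsHomNovikov.tensor_right_comm (hS : IsHomNovikov 𝒮 ε mulS αS) (hε : IsBicharacter ε)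
    (hmulT : IsColorTensorMul 𝒮 𝒜 ε mulS mulA mulT) (hA : IsHomAssociative 𝒜 mulA αA)
    (hcomm : IsEpsCommutative 𝒜 ε mulA) (hX : X ∈ tensorGrading 𝒮 𝒜 a)
    (hY : Y ∈ tensorGrading 𝒮 𝒜 b) (hZ : Z ∈ tensorGrading 𝒮 𝒜 c) :
    mulT (mulT X Y) (TensorProduct.map αS αA Z) =
      ε b c • mulT (mulT X Z) (TensorProduct.map αS αA Y) := by
  rw [tensorGrading_eq_span] at hX hY hZ
  refine eqOn_span₃ (F := mulMulTwist mulT (TensorProduct.map αS αA))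
    (G := ε b c • (lflip.toLinearMap ∘ₗ mulMulTwist mulT (TensorProduct.map αS αA))) ?_ hX hY hZ
  rintro _ ⟨a₁, a₂, rfl, x, hx, u, hu, rfl⟩ _ ⟨b₁, b₂, rfl, y, hy, v, hv, rfl⟩
    _ ⟨c₁, c₂, rfl, z, hz, w, hw, rfl⟩
  change mulT (mulT _ _) (TensorProduct.map αS αA _) =
    ε _ _ • mulT (mulT _ _) (TensorProduct.map αS αA _)
  rw [mul_mul_map_tmul hε hmulT hS.1 hS.2.1 hA.1 hA.2.1 hx hu hy hv hz hw,
    mul_mul_map_tmul hε hmulT hS.1 hS.2.1 hA.1 hA.2.1 hx hu hz hw hy hv,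
    hS.2.2.1 a₁ b₁ c₁ x hx y hy z hz, hA.mul_mul_right_comm hcomm hu hv hw,
    ← TensorProduct.smul_tmul', TensorProduct.tmul_smul, smul_smul, smul_smul, smul_smul]
  congr 1
  simp only [hε.2.2.1, hε.2.2.2]
  linear_combination (-(ε a₂ b₁ * ε a₂ c₁ * ε b₂ c₁ * ε b₁ c₁ * ε b₂ c₂)) * hε.2.1 b₁ c₂

theorem IsHomNovikov.tensor_homAssociator_symm (hS : IsHomNovikov 𝒮 ε mulS αS)
    (hε : IsBicharacter ε) (hmulT : IsColorTensorMul 𝒮 𝒜 ε mulS mulA mulT)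
    (hA : IsHomAssociative 𝒜 mulA αA) (hcomm : IsEpsCommutative 𝒜 ε mulA)
    (hX : X ∈ tensorGrading 𝒮 𝒜 a) (hY : Y ∈ tensorGrading 𝒮 𝒜 b)
    (hZ : Z ∈ tensorGrading 𝒮 𝒜 c) :
    homAssociator mulT (TensorProduct.map αS αA) X Y Z =
      ε a b • homAssociator mulT (TensorProduct.map αS αA) Y X Z := by
  rw [tensorGrading_eq_span] at hX hY hZ
  refine eqOn_span₃ (F := homAssociator mulT (TensorProduct.map αS αA))
    (G := ε a b • (homAssociator mulT (TensorProduct.map αS αA)).flip) ?_ hX hY hZ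
  rintro _ ⟨a₁, a₂, rfl, x, hx, u, hu, rfl⟩ _ ⟨b₁, b₂, rfl, y, hy, v, hv, rfl⟩
    _ ⟨c₁, c₂, rfl, z, hz, w, hw, rfl⟩
  have hSsymm : homAssociator mulS αS x y z = ε a₁ b₁ • homAssociator mulS αS y x z :=
    hS.2.2.2 a₁ b₁ c₁ x hx y hy z hz
  have hAcomm : mulA (mulA v u) (αA w) = ε b₂ a₂ • mulA (mulA u v) (αA w) := by
    rw [hcomm b₂ a₂ v hv u hu, map_smul, LinearMap.smul_apply]
  rw [LinearMap.smul_apply, LinearMap.smul_apply, LinearMap.smul_apply, flip_apply,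
    homAssociator_tmul hε hmulT hS.1 hS.2.1 hA hx hu hy hv hz hw,
    homAssociator_tmul hε hmulT hS.1 hS.2.1 hA hy hv hx hu hz hw, hSsymm, hAcomm,
    ← TensorProduct.smul_tmul', TensorProduct.tmul_smul, smul_smul, smul_smul, smul_smul]
  congr 1
  simp only [hε.2.2.1, hε.2.2.2]
  linear_combination (-(ε a₁ b₁ * ε a₂ b₁ * ε b₂ c₁ * ε a₂ c₁)) * hε.2.1 a₁ b₂
    - ε a₁ b₁ * ε a₂ b₁ * ε b₂ c₁ * ε a₂ c₁ * ε a₁ b₂ * ε b₂ a₁ * hε.2.1 a₂ b₂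

end ColorTensorProduct

theorem statement14_general {K G S A : Type*} [Field K] [AddCommGroup G]
    [AddCommGroup S] [Module K S] [AddCommGroup A] [Module K A]
    (𝒮 : G → Submodule K S)
    (𝒜 : G → Submodule K A)
    (ε : G → G → K) (hε : IsBicharacter ε)
    (mulA : A →ₗ[K] A →ₗ[K] A) (αA : A →ₗ[K] A)
    (hA : IsHomAssociative 𝒜 mulA αA) (hcomm : IsEpsCommutative 𝒜 ε mulA)
    (mulS : S →ₗ[K] S →ₗ[K] S) (αS : S →ₗ[K] S)
    (hS : IsHomNovikov 𝒮 ε mulS αS)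
    (mulT : (S ⊗[K] A) →ₗ[K] (S ⊗[K] A) →ₗ[K] (S ⊗[K] A))
    (hmulT : ∀ a b c d : G, ∀ x ∈ 𝒮 a, ∀ u ∈ 𝒜 b, ∀ y ∈ 𝒮 c, ∀ v ∈ 𝒜 d,
      mulT (x ⊗ₜ[K] u) (y ⊗ₜ[K] v) = ε b c • (mulS x y ⊗ₜ[K] mulA u v)) :
    IsHomNovikov
      (fun c : G => ⨆ (p : G × G) (_ : p.1 + p.2 = c),
        LinearMap.range (TensorProduct.map (𝒮 p.1).subtype (𝒜 p.2).subtype))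
      ε mulT (TensorProduct.map αS αA) :=
  ⟨hS.1.tensor hA.1 hmulT, hS.2.1.tensorMap hA.2.1,
    fun _ _ _ _ hX _ hY _ hZ => hS.tensor_right_comm hε hmulT hA hcomm hX hY hZ,
    fun _ _ _ _ hX _ hY _ hZ => hS.tensor_homAssociator_symm hε hmulT hA hcomm hX hY hZ⟩

/-- the tensor product of a Hom-Novikov color algebra `S` with an
ε-commutative Hom-associative color algebra `A` is a Hom-Novikov color algebra,
with the grading `(S⊗A)_c = ⊕_{a+b=c} S_a ⊗ A_b`, the product determined on
homogeneous pure tensors by `(x⊗u) ⋆ (y⊗v) = ε(u,y) (x∗y) ⊗ (u·v)`, and the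
twisting map `α_S ⊗ α_A`. -/
theorem statement14 {K G S A : Type*} [Field K] [AddCommGroup G] [DecidableEq G]
    [AddCommGroup S] [Module K S] [AddCommGroup A] [Module K A]
    (𝒮 : G → Submodule K S) [DirectSum.Decomposition 𝒮]
    (𝒜 : G → Submodule K A) [DirectSum.Decomposition 𝒜]
    (ε : G → G → K) (hε : IsBicharacter ε)
    (mulA : A →ₗ[K] A →ₗ[K] A) (αA : A →ₗ[K] A)
    (hA : IsHomAssociative 𝒜 mulA αA) (hcomm : IsEpsCommutative 𝒜 ε mulA)
    (mulS : S →ₗ[K] S →ₗ[K] S) (αS : S →ₗ[K] S)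
    (hS : IsHomNovikov 𝒮 ε mulS αS)
    (mulT : (S ⊗[K] A) →ₗ[K] (S ⊗[K] A) →ₗ[K] (S ⊗[K] A))
    (hmulT : ∀ a b c d : G, ∀ x ∈ 𝒮 a, ∀ u ∈ 𝒜 b, ∀ y ∈ 𝒮 c, ∀ v ∈ 𝒜 d,
      mulT (x ⊗ₜ[K] u) (y ⊗ₜ[K] v) = ε b c • (mulS x y ⊗ₜ[K] mulA u v)) :
    IsHomNovikov
      (fun c : G => ⨆ (p : G × G) (_ : p.1 + p.2 = c),
        LinearMap.range (TensorProduct.map (𝒮 p.1).subtype (𝒜 p.2).subtype))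
      ε mulT (TensorProduct.map αS αA) :=
  statement14_general 𝒮 𝒜 ε hε mulA αA hA hcomm mulS αS hS mulT hmulT
end

section
/- Let (A, ·, ε, α, B) be a quadratic Hom-Novikov color algebra and let β : A → A be a symmetric automorphism, i.e. a bijective even linear map with β(x·y) = β(x)·β(y), β∘α = α∘β, and B(β(x), y) = B(x, β(y)) for all x, y. Then A_β = (A, ·_β = β∘·, ε, β∘α, B_β) with B_β(x, y) := B(β(x), y) is a quadratic Hom-Novikov color algebra: (A, β∘·, ε, β∘α) is a Hom-Novikov color algebra, B_β is bilinear, ε-symmetric and nondegenerate, B_β(x·_β y, z) = B_β(x, y·_β z), and B_β((β∘α)(x), y) = B_β(x, (β∘α)(y)). -/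
open scoped TensorProduct

variable {K G A : Type*}

/-- twisting a quadratic Hom-Novikov color algebra `(A,·,ε,α,B)` by a
symmetric automorphism `β` gives the quadratic Hom-Novikov color algebra
`A_β = (A, β∘·, ε, β∘α, B_β)` with `B_β(x,y) = B(β(x),y)`. -/
theorem statement15 {K G A : Type*} [Field K] [AddCommGroup G] [DecidableEq G]
    [AddCommGroup A] [Module K A]
    (𝒜 : G → Submodule K A) [DirectSum.Decomposition 𝒜]
    (ε : G → G → K) (hε : IsBicharacter ε)
    (mul : A →ₗ[K] A →ₗ[K] A) (α : A →ₗ[K] A)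
    (hN : IsHomNovikov 𝒜 ε mul α)
    (B : A →ₗ[K] A →ₗ[K] K)
    (hBsym : ∀ a b : G, ∀ x ∈ 𝒜 a, ∀ y ∈ 𝒜 b, B x y = ε a b * B y x)
    (hBnd : ∀ x : A, (∀ y : A, B x y = 0) → x = 0)
    (hBinv : ∀ x y z : A, B (mul x y) z = B x (mul y z))
    (hBα : ∀ x y : A, B (α x) y = B x (α y))
    (β : A →ₗ[K] A) (hβbij : Function.Bijective β) (hβeven : IsEven 𝒜 β)
    (hβmul : ∀ x y : A, β (mul x y) = mul (β x) (β y))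
    (hβα : β ∘ₗ α = α ∘ₗ β)
    (hβB : ∀ x y : A, B (β x) y = B x (β y)) :
    IsHomNovikov 𝒜 ε (mul.compr₂ β) (β ∘ₗ α) ∧
    (∀ a b : G, ∀ x ∈ 𝒜 a, ∀ y ∈ 𝒜 b, (B ∘ₗ β) x y = ε a b * (B ∘ₗ β) y x) ∧
    (∀ x : A, (∀ y : A, (B ∘ₗ β) x y = 0) → x = 0) ∧
    (∀ x y z : A, (B ∘ₗ β) (mul.compr₂ β x y) z = (B ∘ₗ β) x (mul.compr₂ β y z)) ∧
    (∀ x y : A, (B ∘ₗ β) ((β ∘ₗ α) x) y = (B ∘ₗ β) x ((β ∘ₗ α) y)) := by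
  obtain ⟨hgr, hαeven, hNov1, hNov2⟩ := hN
  have hm : ∀ x y : A, (mul.compr₂ β) x y = β (mul x y) := fun x y => rfl
  have hm' : ∀ x y : A, β (mul x y) = mul (β x) (β y) := hβmul
  have hβα' : ∀ x : A, β (α x) = α (β x) := fun x => LinearMap.congr_fun hβα x
  refine ⟨⟨?_, ?_, ?_, ?_⟩, ?_, ?_, ?_, ?_⟩
  · intro a b x hx y hy
    exact hβeven _ _ (hgr a b x hx y hy)
  · intro a x hx
    exact hβeven _ _ (hαeven a x hx)
  · intro a b c x hx y hy z hz
    have h := hNov1 a b c x hx y hy z hz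
    simp only [hm, LinearMap.comp_apply]
    rw [← hβmul, ← hβmul, h, map_smul, map_smul]
  · intro a b c x hx y hy z hz
    have h := hNov2 a b c x hx y hy z hz
    simp only [hm, LinearMap.comp_apply]
    rw [← hβmul, ← hβmul, ← hβmul, ← hβmul, ← map_sub, ← map_sub,
      ← map_sub, ← map_sub, h, map_smul, map_smul]
  · intro a b x hx y hy
    have := hBsym a b (β x) (hβeven a x hx) y hy
    simp only [LinearMap.comp_apply]
    rw [this, hβB]
  · intro x hx
    have : β x = 0 := hBnd _ (fun y => hx y)
    exact hβbij.injective (by simp [this])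
  · intro x y z
    simp only [LinearMap.comp_apply, hm]
    rw [hβB, hm', hBinv, ← hm']
  · intro x y
    simp only [LinearMap.comp_apply]
    rw [hβB, hβα', hBα, ← hβα', ← hβB]
end

section
/- In any ε-commutative Hom-associative color algebra (A, ·, ε, α), the identities (x·y)·α(z) = α(x)·(y·z) = ε(y,z)(x·z)·α(y) hold for all homogeneous x, y, z; consequently every ε-commutative Hom-associative color algebra is a Hom-Novikov color algebra. -/
open scoped TensorProduct

variable {K G A : Type*}

/-- in any ε-commutative Hom-associative color algebra the identities
`(x·y)·α(z) = α(x)·(y·z) = ε(y,z)(x·z)·α(y)` hold on homogeneous elements, and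
consequently it is a Hom-Novikov color algebra. -/
theorem statement17 {K G A : Type*} [Field K] [AddCommGroup G] [DecidableEq G]
    [AddCommGroup A] [Module K A]
    (𝒜 : G → Submodule K A) [DirectSum.Decomposition 𝒜]
    (ε : G → G → K) (hε : IsBicharacter ε)
    (mul : A →ₗ[K] A →ₗ[K] A) (α : A →ₗ[K] A)
    (hA : IsHomAssociative 𝒜 mul α) (hcomm : IsEpsCommutative 𝒜 ε mul) :
    (∀ a b c : G, ∀ x ∈ 𝒜 a, ∀ y ∈ 𝒜 b, ∀ z ∈ 𝒜 c,
      mul (mul x y) (α z) = mul (α x) (mul y z) ∧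
      mul (α x) (mul y z) = ε b c • mul (mul x z) (α y)) ∧
    IsHomNovikov 𝒜 ε mul α := by
  obtain ⟨hgr, heven, hassoc⟩ := hA
  have key : ∀ a b c : G, ∀ x ∈ 𝒜 a, ∀ y ∈ 𝒜 b, ∀ z ∈ 𝒜 c,
      mul (mul x y) (α z) = mul (α x) (mul y z) ∧
      mul (α x) (mul y z) = ε b c • mul (mul x z) (α y) := by
    intro a b c x hx y hy z hz
    refine ⟨(hassoc a b c x hx y hy z hz).symm, ?_⟩
    rw [hcomm b c y hy z hz, map_smul, hassoc a c b x hx z hz y hy]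
  refine ⟨key, hgr, heven, ?_, ?_⟩
  · intro a b c x hx y hy z hz
    rw [(key a b c x hx y hy z hz).1, (key a b c x hx y hy z hz).2]
  · intro a b c x hx y hy z hz
    rw [(key a b c x hx y hy z hz).1, (key b a c y hy x hx z hz).1]
    simp
end

section
/- Let (A, ·, ε, α, B) be a quadratic Hom-Novikov color algebra. Define [x, y] := x·y − ε(x,y) y·x for homogeneous x, y. Then (A, [·,·], ε, α, B) is a quadratic Hom-Lie color algebra: (A, [·,·], ε, α) is a Hom-Lie color algebra and B([x,y], z) = B(x, [y,z]) for all homogeneous x, y, z. -/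
open scoped TensorProduct

variable {K G A : Type*}

/-- a quadratic Hom-Novikov color algebra `(A,·,ε,α,B)` gives a
quadratic Hom-Lie color algebra `(A,[·,·],ε,α,B)` with
`[x,y] = x·y − ε(x,y) y·x`. -/
theorem statement18 {K G A : Type*} [Field K] [AddCommGroup G] [DecidableEq G]
    [AddCommGroup A] [Module K A]
    (𝒜 : G → Submodule K A) [DirectSum.Decomposition 𝒜]
    (ε : G → G → K) (hε : IsBicharacter ε)
    (mul : A →ₗ[K] A →ₗ[K] A) (α : A →ₗ[K] A)
    (hN : IsHomNovikov 𝒜 ε mul α)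
    (B : A →ₗ[K] A →ₗ[K] K)
    (hBsym : ∀ a b : G, ∀ x ∈ 𝒜 a, ∀ y ∈ 𝒜 b, B x y = ε a b * B y x)
    (hBnd : ∀ x : A, (∀ y : A, B x y = 0) → x = 0)
    (hBinv : ∀ x y z : A, B (mul x y) z = B x (mul y z))
    (hBα : ∀ x y : A, B (α x) y = B x (α y)) :
    -- `(A, [·,·], ε, α)` is a Hom-Lie color algebra
    ((∀ a b : G, ∀ x ∈ 𝒜 a, ∀ y ∈ 𝒜 b, homBracket ε mul a b x y ∈ 𝒜 (a + b)) ∧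
     (∀ a b : G, ∀ x ∈ 𝒜 a, ∀ y ∈ 𝒜 b,
        homBracket ε mul a b x y = -(ε a b • homBracket ε mul b a y x)) ∧
     (∀ a b c : G, ∀ x ∈ 𝒜 a, ∀ y ∈ 𝒜 b, ∀ z ∈ 𝒜 c,
        ε c a • homBracket ε mul a (b + c) (α x) (homBracket ε mul b c y z)
        + ε a b • homBracket ε mul b (c + a) (α y) (homBracket ε mul c a z x)
        + ε b c • homBracket ε mul c (a + b) (α z) (homBracket ε mul a b x y)
          = 0)) ∧
    -- invariance of `B` under the bracket
    (∀ a b c : G, ∀ x ∈ 𝒜 a, ∀ y ∈ 𝒜 b, ∀ z ∈ 𝒜 c,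
      B (homBracket ε mul a b x y) z = B x (homBracket ε mul b c y z)) := by
  obtain ⟨hgr, hev, hN1, hN2⟩ := hN
  obtain ⟨hne, hskew, hadd1, hadd2⟩ := hε
  refine ⟨⟨?_, ?_, ?_⟩, ?_⟩
  · intro a b x hx y hy
    exact sub_mem (hgr a b x hx y hy)
      (Submodule.smul_mem _ _ (by rw [add_comm]; exact hgr b a y hy x hx))
  · intro a b x hx y hy
    rw [homBracket, homBracket, smul_sub, smul_smul, hskew a b, one_smul, neg_sub]
  · intro a b c x hx y hy z hz
    have hba : ε b a = (ε a b)⁻¹ := eq_inv_of_mul_eq_one_right (hskew a b)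
    have hcb : ε c b = (ε b c)⁻¹ := eq_inv_of_mul_eq_one_right (hskew b c)
    have hac : ε a c = (ε c a)⁻¹ := eq_inv_of_mul_eq_one_right (hskew c a)
    have e1 := hN2 b a c y hy x hx z hz
    have e2 := hN2 c b a z hz y hy x hx
    have e3 := hN2 a c b x hx z hz y hy
    rw [hba] at e1
    rw [hcb] at e2
    rw [hac] at e3
    simp only [homBracket, map_sub, map_smul, LinearMap.sub_apply, LinearMap.smul_apply,
      smul_sub, smul_smul, hadd1, hba, hcb, hac]
    have h1 : ε a b ≠ 0 := hne a b
    have h2 : ε b c ≠ 0 := hne b c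
    have h3 : ε c a ≠ 0 := hne c a
    linear_combination (norm := skip) (ε c a * ε a b) • e1 + (ε a b * ε b c) • e2
      + (ε b c * ε c a) • e3
    match_scalars <;> field_simp <;> ring
  · intro a b c x hx y hy z hz
    have hxz := hgr a c x hx z hz
    have hs := hBsym b (a + c) y hy (mul x z) hxz
    simp only [homBracket, map_sub, map_smul, LinearMap.sub_apply, LinearMap.smul_apply,
      smul_eq_mul] at *
    rw [hBinv x y z, hBinv y x z, hs, hadd1, hBinv x z y]
    linear_combination (-(ε b c * (B x (mul z y)))) * hskew a b
end

section
/- Let (A, ·, ε, α, B, α) be a Hom-quadratic involutive multiplicative Hom-Novikov color algebra (α² = id, α(x·y) = α(x)·α(y); B ε-symmetric, nondegenerate, with B(x·y, α(z)) = B(α(x), y·z) and B(α(x), y) = B(x, α(y))). Then (A, ·_α = α∘·, ε, B), i.e. A with the product x ·_α y = α(x·y), is a quadratic Novikov color algebra: it is a Novikov color algebra and B(x ·_α y, z) = B(x, y ·_α z) for all x, y, z. -/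
open scoped TensorProduct

variable {K G A : Type*}

/-- a Hom-quadratic involutive multiplicative Hom-Novikov color
algebra `(A,·,ε,α,B,α)` gives a quadratic Novikov color algebra
`(A, ·_α = α∘·, ε, B)`. -/
theorem statement19 {K G A : Type*} [Field K] [AddCommGroup G] [DecidableEq G]
    [AddCommGroup A] [Module K A]
    (𝒜 : G → Submodule K A) [DirectSum.Decomposition 𝒜]
    (ε : G → G → K) (hε : IsBicharacter ε)
    (mul : A →ₗ[K] A →ₗ[K] A) (α : A →ₗ[K] A)
    (hN : IsHomNovikov 𝒜 ε mul α)
    (hinv : α ∘ₗ α = LinearMap.id)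
    (hmult : ∀ x y : A, α (mul x y) = mul (α x) (α y))
    (B : A →ₗ[K] A →ₗ[K] K)
    (hBsym : ∀ a b : G, ∀ x ∈ 𝒜 a, ∀ y ∈ 𝒜 b, B x y = ε a b * B y x)
    (hBnd : ∀ x : A, (∀ y : A, B x y = 0) → x = 0)
    (hBinv : ∀ x y z : A, B (mul x y) (α z) = B (α x) (mul y z))
    (hBα : ∀ x y : A, B (α x) y = B x (α y)) :
    IsHomNovikov 𝒜 ε (mul.compr₂ α) LinearMap.id ∧
    (∀ x y z : A, B (mul.compr₂ α x y) z = B x (mul.compr₂ α y z)) := by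

  obtain ⟨hgr, heven, hnov1, hnov2⟩ := hN
  have hinv' : ∀ x : A, α (α x) = x := fun x => congrFun (congrArg DFunLike.coe hinv) x
  have key : ∀ x y : A, mul.compr₂ α x y = α (mul x y) := fun _ _ => rfl
  -- rewrite the new product iterates
  have hma : ∀ x y z : A, mul.compr₂ α (mul.compr₂ α x y) z = mul (mul x y) (α z) := by
    intro x y z
    simp only [key, hmult, hinv']
  have hma' : ∀ x y z : A, mul.compr₂ α x (mul.compr₂ α y z) = mul (α x) (mul y z) := by
    intro x y z
    simp only [key, hmult, hinv']
  refine ⟨⟨?_, ?_, ?_, ?_⟩, ?_⟩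
  · intro a b x hx y hy
    exact heven _ _ (hgr a b x hx y hy)
  · intro a x hx; exact hx
  · intro a b c x hx y hy z hz
    simp only [LinearMap.id_coe, id_eq, key, hmult, hinv']
    exact hnov1 a b c x hx y hy z hz
  · intro a b c x hx y hy z hz
    simp only [LinearMap.id_coe, id_eq, key, hmult, hinv']
    exact hnov2 a b c x hx y hy z hz
  · intro x y z
    have : B (α (mul x y)) z = B x (α (mul y z)) := by
      rw [hBα, hBinv, hBα]
    simpa [key] using this
end
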